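/- Let R be an Artinian commutative ring whose co-maximal graph C_Γ(R) has finite nonorientable genus. Then R is a finite ring. -/

import Mathlib

namespace CrosscapDef

open SimpleGraph

variable {V : Type*}

/-- An embedding scheme (rotation system together with an edge signature) for a simple
graph `G`: `rot` cyclically permutes the darts around each vertex (a single cycle at every
vertex), and `sgn d = true` means the edge of `d` is orientation-reversing. -/
structure Scheme {V : Type*} (G : SimpleGraph V) where
  rot : Equiv.Perm G.Dart
  rot_fst : ∀ d : G.Dart, (rot d).toProd.1 = d.toProd.1
  rot_single : ∀ d e : G.Dart, d.toProd.1 = e.toProd.1 → rot.SameCycle d e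
  sgn : G.Dart → Bool
  sgn_symm : ∀ d : G.Dart, sgn d.symm = sgn d

/-- Crossing an edge: reverse the dart and flip the local orientation according to the
signature. -/
def Scheme.flip {G : SimpleGraph V} (σ : Scheme G) : Equiv.Perm (G.Dart × Bool) :=
  Function.Involutive.toPerm (fun p => (p.1.symm, xor p.2 (σ.sgn p.1)))
    (by
      rintro ⟨d, s⟩
      simp [SimpleGraph.Dart.symm_symm, σ.sgn_symm, Bool.xor_assoc])

/-- Turning around a vertex: apply the rotation or its inverse, depending on the current
local orientation. -/
def Scheme.step {G : SimpleGraph V} (σ : Scheme G) : Equiv.Perm (G.Dart × Bool) where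
  toFun p := (cond p.2 (σ.rot p.1) (σ.rot.symm p.1), p.2)
  invFun p := (cond p.2 (σ.rot.symm p.1) (σ.rot p.1), p.2)
  left_inv := by rintro ⟨d, s⟩; cases s <;> simp
  right_inv := by rintro ⟨d, s⟩; cases s <;> simp

/-- The face-tracing permutation of an embedding scheme. -/
def Scheme.facePerm {G : SimpleGraph V} (σ : Scheme G) : Equiv.Perm (G.Dart × Bool) :=
  σ.step * σ.flip

/-- The number of cycles (orbits) of a permutation. -/
noncomputable def cycleCount {α : Type*} (f : Equiv.Perm α) : ℕ :=
  Nat.card (Quotient (Setoid.mk f.SameCycle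
    ⟨fun _ => Equiv.Perm.SameCycle.rfl, Equiv.Perm.SameCycle.symm, Equiv.Perm.SameCycle.trans⟩))

/-- The number of faces of an embedding scheme: each face is traced twice by `facePerm`. -/
noncomputable def Scheme.faceCount {G : SimpleGraph V} (σ : Scheme G) : ℕ :=
  cycleCount σ.facePerm / 2

/-- The Euler genus `2 - v + e - f` of (the surface of) an embedding scheme of a connected
graph. -/
noncomputable def Scheme.eulerGenus {G : SimpleGraph V} (σ : Scheme G) : ℤ :=
  2 - (Nat.card V : ℤ) + ((Nat.card G.Dart / 2 : ℕ) : ℤ) - (σ.faceCount : ℤ)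

/-- An embedding scheme is orientable iff its signature is switching-equivalent to the
all-positive signature. -/
def Scheme.Orientable {G : SimpleGraph V} (σ : Scheme G) : Prop :=
  ∃ f : V → Bool, ∀ d : G.Dart, σ.sgn d = xor (f d.toProd.1) (f d.toProd.2)

/-- `G` embeds in the sphere with `k` crosscaps: some connected supergraph of `G` (on the same
vertex set) has a cellular embedding scheme whose surface is the sphere with `k` crosscaps. -/
def EmbedsWithCrosscaps (G : SimpleGraph V) (k : ℕ) : Prop :=
  ∃ H : SimpleGraph V, G ≤ H ∧ H.Preconnected ∧
    ∃ σ : Scheme H, σ.eulerGenus = (k : ℤ) ∧ (k = 0 ∨ ¬ σ.Orientable)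

/-- `G` embeds in the sphere with `g` handles (an orientable surface of genus `g`). -/
def EmbedsWithHandles (G : SimpleGraph V) (g : ℕ) : Prop :=
  ∃ H : SimpleGraph V, G ≤ H ∧ H.Preconnected ∧
    ∃ σ : Scheme H, σ.eulerGenus = (2 * g : ℤ) ∧ σ.Orientable

/-- The nonorientable genus (crosscap number) of a finite graph: the least `k` such that `G`
embeds in the sphere with `k` crosscaps. -/
noncomputable def crosscap (G : SimpleGraph V) : ℕ :=
  sInf {k : ℕ | EmbedsWithCrosscaps G k}

/-- The (orientable) genus of a finite graph. -/
noncomputable def genus (G : SimpleGraph V) : ℕ :=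
  sInf {g : ℕ | EmbedsWithHandles G g}

/-- The nonorientable genus of an arbitrary (possibly infinite) graph: the supremum of the
nonorientable genera of its finite (induced) subgraphs. -/
noncomputable def crosscapE (G : SimpleGraph V) : ℕ∞ :=
  ⨆ s : Finset V, (crosscap (G.induce (s : Set V)) : ℕ∞)

end CrosscapDef

namespace CrosscapDef
/-- The generalized unit and unitary Cayley graph `Γ(R, G, S)`: vertices are the elements of
`R`, and distinct `x`, `y` are adjacent iff `x + s*y` is a unit belonging to `G` for some
`s ∈ S`. -/
def gammaGraph (R : Type*) [CommRing R] (G : Subgroup Rˣ) (S : Set Rˣ)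
    (hSG : S ⊆ (G : Set Rˣ)) (hS : S⁻¹ ⊆ S) : SimpleGraph R where
  Adj x y := x ≠ y ∧ ∃ s ∈ S, ∃ u ∈ G, (u : R) = x + (s : Rˣ) * y
  symm := ⟨by
    rintro x y ⟨hxy, s, hs, u, hu, h⟩
    refine ⟨hxy.symm, s⁻¹, hS (by simpa using hs), s⁻¹ * u,
      mul_mem (inv_mem (hSG hs)) hu, ?_⟩
    have h1 : ((s⁻¹ : Rˣ) : R) * (s : R) = 1 := Units.inv_mul s
    calc ((s⁻¹ * u : Rˣ) : R) = ((s⁻¹ : Rˣ) : R) * ((u : Rˣ) : R) := Units.val_mul _ _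
      _ = ((s⁻¹ : Rˣ) : R) * (x + (s : Rˣ) * y) := by rw [h]
      _ = y + ((s⁻¹ : Rˣ) : R) * x := by rw [mul_add, ← mul_assoc, h1]; ring⟩
  loopless := ⟨fun x h => h.1 rfl⟩

/-- The graph `Γ(R, S) = Γ(R, U(R), S)`. -/
def unitGammaGraph (R : Type*) [CommRing R] (S : Set Rˣ) (hS : S⁻¹ ⊆ S) : SimpleGraph R :=
  gammaGraph R ⊤ S (fun x _ => by simp) hS

/-- The co-maximal graph of `R`: distinct `x`, `y` are adjacent iff `Rx + Ry = R`. -/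
def comaximalGraph (R : Type*) [CommRing R] : SimpleGraph R where
  Adj x y := x ≠ y ∧ Ideal.span {x} ⊔ Ideal.span {y} = ⊤
  symm := ⟨by rintro x y ⟨h1, h2⟩; exact ⟨h1.symm, by rwa [sup_comm]⟩⟩
  loopless := ⟨fun x h => h.1 rfl⟩

end CrosscapDef

/-! The units of `R` are pairwise co-maximal, so they span a clique of the co-maximal graph.
An Artinian ring with finitely many units is finite: its nilradical embeds into `Rˣ` by
`x ↦ 1 + x`, and `R ⧸ nilradical R` is a finite product of fields whose unit groups are
quotients of `Rˣ`. Hence an infinite Artinian ring contains arbitrarily large complete graphs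
`Kₙ`, and Euler's formula bounds their nonorientable genus: every face of an embedding of
`Kₙ` has length at least three, so `6 g ≥ (n - 3) (n - 4)`. -/

theorem exists_perm_cyclic_on_fibers {α β : Type*} [Finite α] (g : α → β) :
    ∃ π : Equiv.Perm α, (∀ a, g (π a) = g a) ∧
      ∀ a b, g a = g b → π.SameCycle a b := by
  classical
  have hc (b : β) : ∃ c : Equiv.Perm {a // g a = b}, c.IsCycleOn Set.univ := by
    have := Fintype.ofFinite {a // g a = b}
    simpa using (Finset.univ : Finset {a // g a = b}).exists_cycleOn.imp fun _ h => h.1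
  choose c hc using hc
  let e := Equiv.sigmaFiberEquiv g
  refine ⟨e.permCongrHom (Equiv.Perm.sigmaCongrRightHom _ c), fun a => (c _ _).2,
    fun a b hab => ?_⟩
  obtain ⟨i, hi⟩ := (hc (g a)).2 (Set.mem_univ ⟨a, rfl⟩) (Set.mem_univ ⟨b, hab.symm⟩)
  refine ⟨i, ?_⟩
  rw [← map_zpow, ← map_zpow]
  exact congrArg Subtype.val hi

namespace CrosscapDef

open SimpleGraph

theorem three_mul_cycleCount_le {α : Type*} [Finite α] {f : Equiv.Perm α}
    (h₁ : ∀ a, f a ≠ a) (h₂ : ∀ a, f (f a) ≠ a) : 3 * cycleCount f ≤ Nat.card α := by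
  classical
  have := Fintype.ofFinite α
  let q : α → Quotient (Equiv.Perm.SameCycle.setoid f) := Quotient.mk _
  have := Fintype.ofFinite (Quotient (Equiv.Perm.SameCycle.setoid f))
  show 3 * Nat.card (Quotient (Equiv.Perm.SameCycle.setoid f)) ≤ _
  rw [Nat.card_eq_fintype_card, Nat.card_eq_fintype_card, ← Finset.card_univ,
    ← Finset.card_univ]
  refine Finset.mul_card_image_le_card_of_maps_to (f := q) (fun _ _ => Finset.mem_univ _) 3 ?_
  rintro ⟨a⟩ -
  have hq (b : α) (h : f.SameCycle a b) : b ∈ ({x ∈ Finset.univ | q x = q a} : Finset α) := by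
    simpa [q] using Quotient.sound h.symm
  refine le_of_eq_of_le (Finset.card_eq_three.mpr ⟨a, f a, f (f a), (h₁ a).symm, (h₂ a).symm,
    (h₁ (f a)).symm, rfl⟩).symm (Finset.card_le_card ?_)
  simp only [Finset.insert_subset_iff, Finset.singleton_subset_iff]
  exact ⟨hq _ (.refl _ _), hq _ (.apply_right (.refl _ _)),
    hq _ (.apply_right (.apply_right (.refl _ _)))⟩

variable {V : Type*}

theorem Scheme.exists_sgn_eq [Finite V] (G : SimpleGraph V) (s : G.Dart → Bool)
    (hs : ∀ d, s d.symm = s d) : ∃ σ : Scheme G, σ.sgn = s := by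
  have : Finite G.Dart := .of_injective _ Dart.toProd_injective
  obtain ⟨π, hπ, hπc⟩ := exists_perm_cyclic_on_fibers fun d : G.Dart => d.fst
  exact ⟨⟨π, hπ, hπc, s, hs⟩, rfl⟩

namespace Scheme

variable {G : SimpleGraph V} (σ : Scheme G)

theorem not_orientable_of_sgn_eq_true (hσ : ∀ d, σ.sgn d = true) {a b c : V}
    (hab : G.Adj a b) (hbc : G.Adj b c) (hac : G.Adj a c) : ¬ σ.Orientable := by
  rintro ⟨f, hf⟩
  have h₁ := (hσ ⟨(a, b), hab⟩).symm.trans (hf _)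
  have h₂ := (hσ ⟨(b, c), hbc⟩).symm.trans (hf _)
  have h₃ := (hσ ⟨(a, c), hac⟩).symm.trans (hf _)
  simp only at h₁ h₂ h₃
  cases f a <;> cases f b <;> cases f c <;> simp_all

theorem facePerm_apply (d : G.Dart) (s : Bool) :
    σ.facePerm (d, s) =
      (cond (xor s (σ.sgn d)) (σ.rot d.symm) (σ.rot.symm d.symm), xor s (σ.sgn d)) :=
  rfl

theorem fst_rot_symm (d : G.Dart) : (σ.rot.symm d).fst = d.fst := by
  simpa using (σ.rot_fst (σ.rot.symm d)).symm

theorem fst_facePerm (p : G.Dart × Bool) : (σ.facePerm p).1.fst = p.1.snd := by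
  obtain ⟨d, s⟩ := p
  rw [facePerm_apply]
  cases xor s (σ.sgn d) <;> simp [σ.rot_fst, fst_rot_symm]

theorem facePerm_ne (p : G.Dart × Bool) : σ.facePerm p ≠ p := fun h =>
  p.1.adj.ne ((congrArg (fun q => q.1.fst) h).symm.trans (σ.fst_facePerm p))

theorem facePerm_facePerm_ne (hG : ∀ d : G.Dart, ∃ e : G.Dart, e.fst = d.fst ∧ e ≠ d)
    (p : G.Dart × Bool) : σ.facePerm (σ.facePerm p) ≠ p := by
  obtain ⟨d, s⟩ := p
  intro h
  have hback : (σ.facePerm (d, s)).1 = d.symm := by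
    refine Dart.ext _ _ (Prod.ext (σ.fst_facePerm _) ?_)
    simpa [h] using (σ.fst_facePerm (σ.facePerm (d, s))).symm
  have hfix : σ.rot d.symm = d.symm := by
    cases hx : xor s (σ.sgn d) <;>
      simp only [facePerm_apply, hx, cond_false, cond_true] at hback
    · exact (σ.rot.symm_apply_eq.mp hback).symm
    · exact hback
  obtain ⟨e, he, hne⟩ := hG d.symm
  exact hne ((σ.rot_single _ _ he.symm).eq_of_left hfix).symm

theorem three_mul_faceCount_le [Finite V]
    (hG : ∀ d : G.Dart, ∃ e : G.Dart, e.fst = d.fst ∧ e ≠ d) :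
    3 * σ.faceCount ≤ Nat.card G.Dart := by
  have : Finite G.Dart := .of_injective _ Dart.toProd_injective
  have h := three_mul_cycleCount_le σ.facePerm_ne (σ.facePerm_facePerm_ne hG)
  rw [Nat.card_prod, Nat.card_eq_fintype_card (α := Bool), Fintype.card_bool] at h
  unfold faceCount
  omega

end Scheme

theorem card_dart_top [Finite V] :
    Nat.card (⊤ : SimpleGraph V).Dart = Nat.card V * (Nat.card V - 1) := by
  classical
  have := Fintype.ofFinite V
  rw [Nat.card_eq_fintype_card, dart_card_eq_twice_card_edges,
    card_edgeFinset_top_eq_card_choose_two, Nat.choose_two_right, Nat.card_eq_fintype_card]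
  exact Nat.mul_div_cancel' (Nat.even_mul_pred_self _).two_dvd

theorem Scheme.eulerGenus_top_ge [Finite V] (σ : Scheme (⊤ : SimpleGraph V))
    (hV : 3 ≤ Nat.card V) :
    ((Nat.card V : ℤ) - 3) * (Nat.card V - 4) ≤ 6 * σ.eulerGenus := by
  have hG (d : (⊤ : SimpleGraph V).Dart) :
      ∃ e : (⊤ : SimpleGraph V).Dart, e.fst = d.fst ∧ e ≠ d := by
    obtain ⟨c, hca, hcb⟩ := ENat.exists_ne_ne_of_three_le
      (by rw [ENat.card_eq_coe_natCard]; exact_mod_cast hV) d.fst d.snd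
    exact ⟨⟨(d.fst, c), hca.symm⟩, rfl, fun h => hcb (congrArg (·.snd) h)⟩
  have hF := σ.three_mul_faceCount_le hG
  rw [card_dart_top] at hF
  rw [Scheme.eulerGenus, card_dart_top]
  obtain ⟨k, hk⟩ := Nat.even_mul_pred_self (Nat.card V)
  have hkZ : (Nat.card V : ℤ) * (Nat.card V - 1) = k + k := by
    rw [← Nat.cast_one, ← Nat.cast_sub (by omega)]; exact_mod_cast hk
  rw [hk] at hF ⊢
  rw [show (k + k) / 2 = k by omega]
  nlinarith

theorem crosscap_top_ge [Finite V] (hV : 3 ≤ Nat.card V) :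
    ((Nat.card V : ℤ) - 3) * (Nat.card V - 4) ≤ 6 * crosscap (⊤ : SimpleGraph V) := by
  obtain ⟨σ, hσ⟩ := Scheme.exists_sgn_eq (⊤ : SimpleGraph V) (fun _ => true) fun _ => rfl
  have : Nontrivial V := Finite.one_lt_card_iff_nontrivial.mp (by omega)
  obtain ⟨a, b, hab⟩ := exists_pair_ne V
  obtain ⟨c, hca, hcb⟩ := ENat.exists_ne_ne_of_three_le
      (by rw [ENat.card_eq_coe_natCard]; exact_mod_cast hV) a b
  have hσ₀ : 0 ≤ σ.eulerGenus := by
    have := σ.eulerGenus_top_ge hV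
    rcases hV.eq_or_lt with h | h
    · rw [← h] at this; omega
    · nlinarith
  have hne : {k | EmbedsWithCrosscaps (⊤ : SimpleGraph V) k}.Nonempty :=
    ⟨σ.eulerGenus.toNat, ⊤, le_rfl, preconnected_top, σ, (Int.toNat_of_nonneg hσ₀).symm,
      .inr (σ.not_orientable_of_sgn_eq_true (congrFun hσ) hab hcb.symm hca.symm)⟩
  obtain ⟨H, hH, -, τ, hτ, -⟩ := Nat.sInf_mem hne
  obtain rfl : H = ⊤ := top_le_iff.mp hH
  rw [crosscap, ← hτ]
  exact τ.eulerGenus_top_ge hV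

theorem crosscapE_eq_top_of_isClique {G : SimpleGraph V} {s : Set V} (hs : G.IsClique s)
    (hinf : s.Infinite) : crosscapE G = ⊤ := by
  refine (ENat.eq_top_iff_forall_ge).2 fun m => ?_
  obtain ⟨t, hts, ht⟩ := hinf.exists_subset_card_eq (m + 6)
  have hV : Nat.card (t : Set V) = m + 6 := by simp [ht]
  have := crosscap_top_ge (V := (t : Set V)) (by omega)
  rw [hV] at this
  push_cast at this
  refine le_iSup_of_le t ?_
  rw [induce_eq_top.mpr (hs.subset hts)]
  exact_mod_cast (by nlinarith : (m : ℤ) ≤ crosscap (⊤ : SimpleGraph (t : Set V)))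

end CrosscapDef

theorem GroupWithZero.finite_of_finite_units {G₀ : Type*} [GroupWithZero G₀] [Finite G₀ˣ] :
    Finite G₀ := by
  classical
  exact .of_equiv _ ((Equiv.optionCongr unitsEquivNeZero).trans (Equiv.optionSubtypeNe 0))

namespace Ideal

variable {R : Type*} [CommRing R] [Finite Rˣ] {I : Ideal R}

theorem finite_of_le_jacobson_bot (hI : I ≤ jacobson ⊥) : Finite I := by
  have hunit (x : I) : IsUnit (1 + (x : R)) := by
    simpa [add_comm] using mem_jacobson_bot.mp (hI x.2) 1
  refine .of_injective (fun x => (hunit x).unit) fun x y hxy => ?_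
  simpa using congrArg Units.val hxy

theorem finite_units_quotient_of_le_jacobson_bot (hI : I ≤ jacobson ⊥) : Finite (R ⧸ I)ˣ :=
  have := isLocalHom_of_le_jacobson_bot I hI
  .of_surjective _
    (IsLocalRing.surjective_units_map_of_local_ringHom _ Quotient.mk_surjective this)

end Ideal

attribute [local instance] IsArtinianRing.fieldOfSubtypeIsMaximal in
theorem IsArtinianRing.finite_of_finite_units {R : Type*} [CommRing R] [IsArtinianRing R]
    [Finite Rˣ] : Finite R := by
  have hnil : nilradical R ≤ Ideal.jacobson ⊥ := Ideal.radical_le_jacobson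
  have := Ideal.finite_of_le_jacobson_bot hnil
  have := Ideal.finite_units_quotient_of_le_jacobson_bot hnil
  have : Finite (∀ m : MaximalSpectrum R, (R ⧸ m.asIdeal)ˣ) :=
    .of_equiv _
      ((Units.mapEquiv (quotNilradicalEquivPi R).toMulEquiv).trans MulEquiv.piUnits).toEquiv
  have (m : MaximalSpectrum R) : Finite (R ⧸ m.asIdeal) :=
    have := Finite.of_surjective _
      (Function.surjective_eval (β := fun m : MaximalSpectrum R => (R ⧸ m.asIdeal)ˣ) m)
    GroupWithZero.finite_of_finite_units
  have : Finite (R ⧸ (nilradical R).toAddSubgroup) :=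
    .of_equiv _ (quotNilradicalEquivPi R).symm.toEquiv
  exact .of_addSubgroup_quotient (nilradical R).toAddSubgroup

theorem CrosscapDef.isClique_comaximalGraph_units (R : Type*) [CommRing R] :
    (comaximalGraph R).IsClique (Set.range ((↑) : Rˣ → R)) := by
  rintro _ ⟨u, rfl⟩ _ ⟨v, rfl⟩ huv
  exact ⟨huv, by rw [Ideal.span_singleton_eq_top.mpr u.isUnit, top_sup_eq]⟩

open CrosscapDef in
/-- If `R` is an Artinian commutative ring whose co-maximal graph has finite nonorientable
genus, then `R` is a finite ring. -/
theorem finite_of_comaximal_crosscap_ne_top {R : Type*} [CommRing R] [IsArtinianRing R]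
    (h : crosscapE (comaximalGraph R) ≠ ⊤) : Finite R := by
  by_contra hR
  have : Infinite Rˣ :=
    not_finite_iff_infinite.mp fun _ => hR IsArtinianRing.finite_of_finite_units
  exact h (crosscapE_eq_top_of_isClique (isClique_comaximalGraph_units R)
    (Set.infinite_range_of_injective Units.val_injective))
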